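/- There is a continuous map assigning to each graph T ∈ X_Gr an injective function f_T : ℕ → ℕ \ {0, 1} such that for all m, n ∈ ℕ, m and n are adjacent in T if and only if f_T(m) and f_T(n) are adjacent in R_ω; in particular, the map X_Gr → 2^(ℕ \ {0,1}) sending T to the range of f_T is continuous, and the induced subgraph of R_ω on this range is isomorphic to T. -/

import Mathlib

/-- The Polish space of simple graphs on `ℕ`, coded as symmetric irreflexive
`{0,1}`-valued functions on `ℕ × ℕ`. -/
abbrev XGr := { A : ℕ × ℕ → Bool // (∀ a b, A (a, b) = A (b, a)) ∧ ∀ a, A (a, a) = false }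

/-- The adjacency relation of the graph `R_ω`: its vertices are the naturals `≥ 2`, and
distinct vertices `m, n` are adjacent iff `p_m ∣ n` or `p_n ∣ m`, where `(p_k)` is the
increasing enumeration of the primes. -/
def RomegaAdj (m n : ℕ) : Prop :=
  m ≠ n ∧ 2 ≤ m ∧ 2 ≤ n ∧ (Nat.nth Nat.Prime m ∣ n ∨ Nat.nth Nat.Prime n ∣ m)

/-!
Writing `~` for adjacency in `T`, send vertex `0` to `2` and vertex `n + 1` to
`p_{f n + 1} · ∏ {p_{f m} | m ≤ n, m ~ n + 1}`. For `m < n` the prime `p_{f m}` divides `f n`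
exactly when `m ~ n`, since the extra factor `p_{f (n - 1) + 1}` is a different prime; the other
divisibility `p_{f n} ∣ f m` never holds because `f m < f n ≤ p_{f n}`. The value `f n` only
reads the finitely many edges among `0, …, n`, which gives continuity, and since `f n ≥ n`
whether `v` lies in the range of `f` is decided by `f 0, …, f v`.
-/

namespace Nat

theorem nth_prime_strictMono : StrictMono (nth Nat.Prime) :=
  nth_strictMono infinite_setOfPred_prime

theorem nth_prime_dvd_nth_prime_iff {a b : ℕ} :
    nth Nat.Prime a ∣ nth Nat.Prime b ↔ a = b := by
  rw [prime_dvd_prime_iff_eq (prime_nth_prime a) (prime_nth_prime b)]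
  exact nth_prime_strictMono.injective.eq_iff

end Nat

open Nat

theorem RomegaAdj.symm {m n : ℕ} (h : RomegaAdj m n) : RomegaAdj n m :=
  ⟨h.1.symm, h.2.2.1, h.2.1, h.2.2.2.symm⟩

noncomputable def romegaCode (A : ℕ × ℕ → Bool) : ℕ → ℕ
  | 0 => 2
  | n + 1 =>
      nth Nat.Prime (romegaCode A n + 1) *
        ∏ m ∈ (Finset.range (n + 1)).attach,
          if A (m.1, n + 1) then nth Nat.Prime (romegaCode A m.1) else 1
decreasing_by
  · omega
  · have := Finset.mem_range.mp m.2; omega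

section romegaCode

variable (A : ℕ × ℕ → Bool)

theorem romegaCode_succ (n : ℕ) :
    romegaCode A (n + 1) = nth Nat.Prime (romegaCode A n + 1) *
      ∏ m ∈ Finset.range (n + 1) with A (m, n + 1), nth Nat.Prime (romegaCode A m) := by
  rw [romegaCode, Finset.prod_filter,
    Finset.prod_attach _ fun m => if A (m, n + 1) then nth Nat.Prime (romegaCode A m) else 1]

theorem romegaCode_lt_succ (n : ℕ) : romegaCode A n < romegaCode A (n + 1) := by
  rw [romegaCode_succ]
  calc romegaCode A n < nth Nat.Prime (romegaCode A n + 1) :=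
        Nat.lt_of_succ_le nth_prime_strictMono.le_apply
    _ ≤ _ := Nat.le_mul_of_pos_right _ <|
        Finset.prod_pos fun m _ => (prime_nth_prime _).pos

theorem romegaCode_strictMono : StrictMono (romegaCode A) :=
  strictMono_nat_of_lt_succ (romegaCode_lt_succ A)

theorem two_le_romegaCode (n : ℕ) : 2 ≤ romegaCode A n := by
  simpa [romegaCode] using (romegaCode_strictMono A).monotone (Nat.zero_le n)

theorem nth_prime_dvd_romegaCode_iff {m n : ℕ} (h : m < n) :
    nth Nat.Prime (romegaCode A m) ∣ romegaCode A n ↔ A (m, n) = true := by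
  obtain ⟨k, rfl⟩ : ∃ k, n = k + 1 := ⟨n - 1, by omega⟩
  have hp := (prime_nth_prime (romegaCode A m)).prime
  rw [romegaCode_succ, hp.dvd_mul, nth_prime_dvd_nth_prime_iff, hp.dvd_finsetProd_iff]
  simp only [Finset.mem_filter, Finset.mem_range, nth_prime_dvd_nth_prime_iff,
    (romegaCode_strictMono A).injective.eq_iff]
  have hne : romegaCode A m ≠ romegaCode A k + 1 :=
    ((romegaCode_strictMono A).monotone (Nat.le_of_lt_succ h)).trans_lt (Nat.lt_succ_self _) |>.ne
  constructor
  · rintro (heq | ⟨j, ⟨-, hA⟩, rfl⟩)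
    · exact absurd heq hne
    · exact hA
  · exact fun hA => Or.inr ⟨m, ⟨h, hA⟩, rfl⟩

theorem romegaAdj_romegaCode_iff {m n : ℕ} (h : m < n) :
    RomegaAdj (romegaCode A m) (romegaCode A n) ↔ A (m, n) = true := by
  rw [← nth_prime_dvd_romegaCode_iff A h]
  refine ⟨fun ⟨_, _, _, hdvd⟩ => hdvd.resolve_right ?_,
    fun hdvd => ⟨(romegaCode_strictMono A h).ne, two_le_romegaCode A m, two_le_romegaCode A n,
      Or.inl hdvd⟩⟩
  intro hdvd
  have := Nat.le_of_dvd (by linarith [two_le_romegaCode A m]) hdvd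
  have := (nth_prime_strictMono (romegaCode_strictMono A h)).trans_le' nth_prime_strictMono.le_apply
  omega

theorem continuous_romegaCode_apply (n : ℕ) :
    Continuous fun A : ℕ × ℕ → Bool => romegaCode A n := by
  induction n using Nat.strong_induction_on with
  | _ n ih =>
    cases n with
    | zero => simpa only [romegaCode] using continuous_const
    | succ n =>
      simp only [romegaCode_succ, Finset.prod_filter]
      have hprime : Continuous fun A : ℕ × ℕ → Bool => nth Nat.Prime (romegaCode A n + 1) :=
        continuous_of_discreteTopology.comp (g := fun k => nth Nat.Prime (k + 1))
          (ih n n.lt_succ_self)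
      refine Continuous.mul (M := ℕ) hprime (continuous_finsetProd _ fun m hm => ?_)
      exact continuous_of_discreteTopology.comp (g := fun p : Bool × ℕ =>
          if p.1 then nth Nat.Prime p.2 else 1)
        ((continuous_apply _).prodMk (ih m (Finset.mem_range.mp hm)))

end romegaCode

open Classical in
theorem continuous_decide_mem_range {X : Type*} [TopologicalSpace X] {F : X → ℕ → ℕ}
    (hF : Continuous F) (hle : ∀ x n, n ≤ F x n) :
    Continuous fun x v => decide (v ∈ Set.range (F x)) := by
  refine continuous_pi fun v => ?_
  have hrange : ∀ x, v ∈ Set.range (F x) ↔ ∃ n : Fin (v + 1), F x n = v := fun x =>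
    ⟨fun ⟨n, hn⟩ => ⟨⟨n, Nat.lt_succ_of_le (hn ▸ hle x n)⟩, hn⟩,
      fun ⟨n, hn⟩ => ⟨n, hn⟩⟩
  simp only [hrange]
  exact continuous_of_discreteTopology.comp
    (g := fun w : Fin (v + 1) → ℕ => decide (∃ n, w n = v))
    (continuous_pi fun n => (continuous_apply _).comp hF)

theorem XGr.adj_iff_romegaAdj (T : XGr) (m n : ℕ) :
    T.1 (m, n) = true ↔ RomegaAdj (romegaCode T.1 m) (romegaCode T.1 n) := by
  rcases lt_trichotomy m n with h | rfl | h
  · exact (romegaAdj_romegaCode_iff T.1 h).symm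
  · simp [T.2.2 m, RomegaAdj]
  · rw [T.2.1 m n, ← romegaAdj_romegaCode_iff T.1 h]
    exact ⟨RomegaAdj.symm, RomegaAdj.symm⟩

open Classical in
/-- There is a continuous map assigning to each graph `T ∈ X_Gr` an injective map
`f_T : ℕ → ℕ \ {0, 1}` which is an isomorphism between `T` and the induced subgraph of
`R_ω` on the range of `f_T`; in particular, the map sending `T` to (the characteristic
function of) the range of `f_T` is continuous. -/
theorem continuous_embedding_into_Romega :
    ∃ F : XGr → ℕ → ℕ, Continuous F ∧
      (∀ T : XGr, Function.Injective (F T) ∧ (∀ n, 2 ≤ F T n) ∧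
        ∀ m n, T.1 (m, n) = true ↔ RomegaAdj (F T m) (F T n)) ∧
      Continuous fun T : XGr => fun v : ℕ => decide (v ∈ Set.range (F T)) := by
  have hcont : Continuous fun T : XGr => romegaCode T.1 :=
    continuous_pi fun n => (continuous_romegaCode_apply n).comp continuous_subtype_val
  refine ⟨fun T => romegaCode T.1, hcont,
    fun T => ⟨(romegaCode_strictMono T.1).injective, two_le_romegaCode T.1,
      T.adj_iff_romegaAdj⟩,
    continuous_decide_mem_range hcont fun T _ => (romegaCode_strictMono T.1).le_apply⟩
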